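/- Let (x*, y*) be a KKT point of (SPOcp) such that SP-MFCQ holds at x*. Then there exist α* > 0 and ε > 0 such that for every α ≥ α*, every KKT point (x, y) of (Pen(α)) with ‖(x, y) − (x*, y*)‖ < ε is a KKT point of (SPOcp). -/

import Mathlib

/-!
At a KKT point of (SPOcp) every index has `x*ᵢ > 0` or `y*ᵢ > 0`, since convexity and
`pᵢ(0) - pᵢ(sᵢ) = ρ > 0` give `pᵢ'(0) < 0`. Near `(x*, y*)` and for large `α`, the
`y`-stationarity `pᵢ'(yᵢ) + α xᵢ = (ν_y)ᵢ` of (Pen(α)) forces `yᵢ = 0` wherever `x*ᵢ > 0`.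
Then the `x`-stationarity writes `-∇f(x)` as a combination with multipliers `(λ, μ, α y - ν_x)`
lying in the cone of SP-MFCQ at `x*`. By compactness SP-MFCQ holds quantitatively,
`c ‖w‖ ≤ ‖Φ_x w‖`, uniformly for `x` near `x*`; so `α yᵢ ≤ ‖∇f(x)‖ / c` stays bounded, and where
`y*ᵢ > 0` this rules out `xᵢ > 0` once `α` is large. With complementarity established, the
multipliers of (Pen(α)) together with `γ = α` certify a KKT point of (SPOcp).
-/

open Filter Topology

noncomputable section

/-- Euclidean n-space. -/
abbrev E (n : ℕ) : Type := EuclideanSpace ℝ (Fin n)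

/-- SP-MFCQ at x*: positive linear independence of the gradients of the
active inequality constraints, the equality constraints and the unit vectors
e_i, i ∈ I₀(x*). -/
def SPMFCQ {n m q : ℕ} (g : Fin m → E n → ℝ) (h : Fin q → E n → ℝ)
    (xstar : E n) : Prop :=
  ∀ (lam : Fin m → ℝ) (mu : Fin q → ℝ) (gam : Fin n → ℝ),
    (∀ i, 0 ≤ lam i) → (∀ i, g i xstar ≠ 0 → lam i = 0) →
    (∀ i, xstar i ≠ 0 → gam i = 0) →
    (∑ i, lam i • gradient (g i) xstar) + (∑ j, mu j • gradient (h j) xstar) +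
      (∑ i, gam i • (EuclideanSpace.single i (1 : ℝ) : E n)) = 0 →
    lam = 0 ∧ mu = 0 ∧ gam = 0

/-- KKT point of the complementarity reformulation (SPOcp). -/
def KKTcp {n m q : ℕ} (f : E n → ℝ) (g : Fin m → E n → ℝ) (h : Fin q → E n → ℝ)
    (p : Fin n → ℝ → ℝ) (x y : E n) : Prop :=
  (∀ i, g i x ≤ 0) ∧ (∀ j, h j x = 0) ∧ (∀ i, 0 ≤ x i) ∧ (∀ i, 0 ≤ y i) ∧
  (∀ i, x i * y i = 0) ∧
  ∃ (lam : Fin m → ℝ) (mu : Fin q → ℝ) (νx νy γ : Fin n → ℝ),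
    (∀ i, 0 ≤ lam i) ∧ (∀ i, lam i * g i x = 0) ∧
    (∀ i, 0 ≤ νx i) ∧ (∀ i, νx i * x i = 0) ∧
    (∀ i, 0 ≤ νy i) ∧ (∀ i, νy i * y i = 0) ∧
    (∀ k, gradient f x k + (∑ i, lam i * gradient (g i) x k) +
        (∑ j, mu j * gradient (h j) x k) - νx k + γ k * y k = 0) ∧
    (∀ i, deriv (p i) (y i) - νy i + γ i * x i = 0)

/-- KKT point of the penalized problem (Pen(α)). -/
def KKTpen {n m q : ℕ} (f : E n → ℝ) (g : Fin m → E n → ℝ) (h : Fin q → E n → ℝ)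
    (p : Fin n → ℝ → ℝ) (α : ℝ) (x y : E n) : Prop :=
  (∀ i, g i x ≤ 0) ∧ (∀ j, h j x = 0) ∧ (∀ i, 0 ≤ x i) ∧ (∀ i, 0 ≤ y i) ∧
  ∃ (lam : Fin m → ℝ) (mu : Fin q → ℝ) (νx νy : Fin n → ℝ),
    (∀ i, 0 ≤ lam i) ∧ (∀ i, lam i * g i x = 0) ∧
    (∀ i, 0 ≤ νx i) ∧ (∀ i, νx i * x i = 0) ∧
    (∀ i, 0 ≤ νy i) ∧ (∀ i, νy i * y i = 0) ∧
    (∀ k, gradient f x k + (∑ i, lam i * gradient (g i) x k) +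
        (∑ j, mu j * gradient (h j) x k) + α * y k - νx k = 0) ∧
    (∀ i, deriv (p i) (y i) + α * x i - νy i = 0)

section Cone

variable {V F : Type*} [NormedAddCommGroup V] [NormedSpace ℝ V] [NormedAddCommGroup F]
  [NormedSpace ℝ F]

theorem exists_pos_mul_norm_le_norm_of_cone [FiniteDimensional ℝ V] (Φ : V →L[ℝ] F) {K : Set V}
    (hK : IsClosed K) (hcone : ∀ w ∈ K, ∀ t : ℝ, 0 ≤ t → t • w ∈ K) (hinj : ∀ w ∈ K, Φ w = 0 → w = 0) :
    ∃ c > 0, ∀ w ∈ K, c * ‖w‖ ≤ ‖Φ w‖ := by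
  set S := K ∩ Metric.sphere 0 1
  have hS : ∃ c > 0, ∀ u ∈ S, c ≤ ‖Φ u‖ := by
    rcases S.eq_empty_or_nonempty with hempty | hne
    · exact ⟨1, one_pos, by simp [hempty]⟩
    obtain ⟨u₀, ⟨hu₀K, hu₀⟩, hmin⟩ := ((isCompact_sphere 0 1).inter_left hK).exists_isMinOn hne
      (Φ.continuous.norm.continuousOn)
    refine ⟨‖Φ u₀‖, norm_pos_iff.2 fun h0 => ?_, fun u hu => hmin hu⟩
    simp [hinj u₀ hu₀K h0] at hu₀
  obtain ⟨c, hc, hcS⟩ := hS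
  refine ⟨c, hc, fun w hw => ?_⟩
  rcases eq_or_ne w 0 with rfl | hw0
  · simp
  have hu : ‖w‖⁻¹ • w ∈ S := ⟨hcone w hw _ (by positivity), by simp [norm_smul, hw0]⟩
  have := hcS _ hu
  rw [map_smul, norm_smul, norm_inv, norm_norm] at this
  rwa [le_inv_mul_iff₀ (norm_pos_iff.2 hw0), mul_comm] at this

theorem eventually_mul_norm_le_norm_apply {X : Type*} [TopologicalSpace X] {Φ : X → V →L[ℝ] F}
    {x₀ : X} (hΦ : ContinuousAt Φ x₀) {K : Set V} {c : ℝ} (hc : 0 < c)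
    (hK : ∀ w ∈ K, c * ‖w‖ ≤ ‖Φ x₀ w‖) :
    ∀ᶠ x in 𝓝 x₀, ∀ w ∈ K, c / 2 * ‖w‖ ≤ ‖Φ x w‖ := by
  filter_upwards [Metric.tendsto_nhds.1 hΦ (c / 2) (half_pos hc)] with x hx w hw
  have hdiff : ‖Φ x₀ w - Φ x w‖ ≤ c / 2 * ‖w‖ := by
    rw [← sub_apply]
    refine (ContinuousLinearMap.le_opNorm _ _).trans (mul_le_mul_of_nonneg_right ?_ (norm_nonneg w))
    rw [← dist_eq_norm, dist_comm]
    exact hx.le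
  linarith [hK w hw, norm_sub_norm_le (Φ x₀ w) (Φ x w)]

end Cone

theorem ContDiff.continuous_gradient {n : ℕ} {φ : E n → ℝ} (hφ : ContDiff ℝ 1 φ) :
    Continuous (gradient φ) :=
  (InnerProductSpace.toDual ℝ (E n)).symm.continuous.comp (hφ.continuous_fderiv one_ne_zero)

section Multipliers

variable {n m q : ℕ}

abbrev Multipliers (m q n : ℕ) : Type := (Fin m → ℝ) × (Fin q → ℝ) × (Fin n → ℝ)

/-- `(λ, μ, γ) ↦ ∑ λᵢ ∇gᵢ(x) + ∑ μⱼ ∇hⱼ(x) + ∑ γᵢ eᵢ`, the map whose injectivity on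
`mfcqCone g x` is SP-MFCQ at `x`. -/
def multiplierMap (g : Fin m → E n → ℝ) (h : Fin q → E n → ℝ) (x : E n) :
    Multipliers m q n →L[ℝ] E n :=
  (∑ i, (ContinuousLinearMap.proj i ∘L ContinuousLinearMap.fst ℝ _ _).smulRight
      (gradient (g i) x)) +
    (∑ j, (ContinuousLinearMap.proj j ∘L ContinuousLinearMap.fst ℝ _ _ ∘L
      ContinuousLinearMap.snd ℝ _ _).smulRight (gradient (h j) x)) +
    ∑ i, (ContinuousLinearMap.proj i ∘L ContinuousLinearMap.snd ℝ _ _ ∘L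
      ContinuousLinearMap.snd ℝ _ _).smulRight (EuclideanSpace.single i (1 : ℝ))

def mfcqCone (g : Fin m → E n → ℝ) (x : E n) : Set (Multipliers m q n) :=
  {w | (∀ i, 0 ≤ w.1 i) ∧ (∀ i, g i x ≠ 0 → w.1 i = 0) ∧ ∀ i, x i ≠ 0 → w.2.2 i = 0}

variable {g : Fin m → E n → ℝ} {h : Fin q → E n → ℝ}

theorem multiplierMap_apply (x : E n) (w : Multipliers m q n) :
    multiplierMap g h x w = (∑ i, w.1 i • gradient (g i) x) + (∑ j, w.2.1 j • gradient (h j) x) +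
      ∑ i, w.2.2 i • (EuclideanSpace.single i (1 : ℝ) : E n) := by
  simp [multiplierMap]

theorem multiplierMap_apply_apply (x : E n) (w : Multipliers m q n) (k : Fin n) :
    multiplierMap g h x w k = (∑ i, w.1 i * gradient (g i) x k) +
      (∑ j, w.2.1 j * gradient (h j) x k) + w.2.2 k := by
  simp [multiplierMap_apply, Pi.single_apply]

theorem continuous_multiplierMap (hg : ∀ i, ContDiff ℝ 1 (g i)) (hh : ∀ j, ContDiff ℝ 1 (h j)) :
    Continuous (multiplierMap g h) := by
  unfold multiplierMap
  refine .add (.add (continuous_finsetSum _ fun i _ => ?_) (continuous_finsetSum _ fun j _ => ?_))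
    continuous_const
  · exact (ContinuousLinearMap.smulRightL ℝ _ _ _).continuous.comp (hg i).continuous_gradient
  · exact (ContinuousLinearMap.smulRightL ℝ _ _ _).continuous.comp (hh j).continuous_gradient

theorem isClosed_mfcqCone (x : E n) : IsClosed (mfcqCone (q := q) g x) := by
  simp only [mfcqCone, Set.ofPred_and, Set.ofPred_forall]
  exact (isClosed_iInter fun i => isClosed_le continuous_const (by fun_prop)).inter
    ((isClosed_iInter fun i => isClosed_iInter fun _ =>
        isClosed_eq (by fun_prop) continuous_const).inter
      (isClosed_iInter fun i => isClosed_iInter fun _ =>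
        isClosed_eq (by fun_prop) continuous_const))

theorem smul_mem_mfcqCone {x : E n} {w : Multipliers m q n} (hw : w ∈ mfcqCone g x) {t : ℝ}
    (ht : 0 ≤ t) : t • w ∈ mfcqCone g x := by
  obtain ⟨hnonneg, hinactive, hsupp⟩ := hw
  exact ⟨fun i => mul_nonneg ht (hnonneg i), fun i hi => by simp [hinactive i hi],
    fun i hi => by simp [hsupp i hi]⟩

theorem SPMFCQ.eq_zero_of_mem_mfcqCone {x : E n} (hmfcq : SPMFCQ g h x) {w : Multipliers m q n}
    (hw : w ∈ mfcqCone g x) (h0 : multiplierMap g h x w = 0) : w = 0 := by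
  obtain ⟨hl, hm, hγ⟩ := hmfcq w.1 w.2.1 w.2.2 hw.1 hw.2.1 hw.2.2 (by rwa [← multiplierMap_apply])
  simp [Prod.ext_iff, hl, hm, hγ]

theorem SPMFCQ.exists_pos_eventually_mul_norm_le (hg : ∀ i, ContDiff ℝ 1 (g i))
    (hh : ∀ j, ContDiff ℝ 1 (h j)) {xstar : E n} (hmfcq : SPMFCQ g h xstar) :
    ∃ c > 0, ∀ᶠ x in 𝓝 xstar, ∀ w ∈ mfcqCone g xstar, c * ‖w‖ ≤ ‖multiplierMap g h x w‖ := by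
  obtain ⟨c, hc, hcone⟩ := exists_pos_mul_norm_le_norm_of_cone (multiplierMap g h xstar)
    (isClosed_mfcqCone xstar) (fun w hw t ht => smul_mem_mfcqCone hw ht)
    (fun w hw => hmfcq.eq_zero_of_mem_mfcqCone hw)
  exact ⟨c / 2, half_pos hc, eventually_mul_norm_le_norm_apply
    (continuous_multiplierMap hg hh).continuousAt hc hcone⟩

end Multipliers

theorem ConvexOn.deriv_neg_of_lt {S : Set ℝ} {φ : ℝ → ℝ} (hφ : ConvexOn ℝ S φ) {a b : ℝ}
    (ha : a ∈ S) (hb : b ∈ S) (hab : a < b) (hd : DifferentiableAt ℝ φ a) (hlt : φ b < φ a) :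
    deriv φ a < 0 :=
  (hφ.deriv_le_slope ha hb hab hd).trans_lt <| by
    rw [slope_def_field]
    exact div_neg_of_neg_of_pos (sub_neg.2 hlt) (sub_pos.2 hab)

section Eventually

variable {ι X : Type*} [Finite ι] [TopologicalSpace X] {x₀ : X}

theorem eventually_forall_lt_of_le_of_ne {u v : ι → X → ℝ} (hu : ∀ i, ContinuousAt (u i) x₀)
    (hv : ∀ i, ContinuousAt (v i) x₀) (hle : ∀ i, u i x₀ ≤ v i x₀) :
    ∀ᶠ x in 𝓝 x₀, ∀ i, u i x₀ ≠ v i x₀ → u i x < v i x :=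
  eventually_all.2 fun i => eventually_imp_distrib_left.2 fun hi =>
    (hu i).eventually_lt (hv i) ((hle i).lt_of_ne hi)

theorem eventually_forall_lt_mul {u v : ι → X → ℝ} (hu : ∀ i, ContinuousAt (u i) x₀)
    (hv : ∀ i, ContinuousAt (v i) x₀) (hu₀ : ∀ i, 0 ≤ u i x₀) :
    ∀ᶠ a in atTop ×ˢ 𝓝 x₀, ∀ i, u i x₀ ≠ 0 → v i a.2 < a.1 * u i a.2 := by
  refine eventually_all.2 fun i => eventually_imp_distrib_left.2 fun hi => ?_
  have : Tendsto (fun a : ℝ × X => a.1 * u i a.2 + -v i a.2) (atTop ×ˢ 𝓝 x₀) atTop :=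
    (tendsto_fst.atTop_mul_pos ((hu₀ i).lt_of_ne' hi) ((hu i).tendsto.comp tendsto_snd)).atTop_add
      ((hv i).tendsto.comp tendsto_snd).neg
  filter_upwards [this.eventually_gt_atTop 0] with a ha
  linarith

end Eventually

theorem exists_forall_ge_forall_dist_lt_of_eventually {X : Type*} [PseudoMetricSpace X]
    {P : ℝ × X → Prop} {x₀ : X} (h : ∀ᶠ a in atTop ×ˢ 𝓝 x₀, P a) :
    ∃ αstar > (0 : ℝ), ∃ ε > (0 : ℝ), ∀ α ≥ αstar, ∀ x, dist x x₀ < ε → P (α, x) := by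
  obtain ⟨pa, hpa, pb, hpb, hP⟩ := eventually_prod_iff.1 h
  obtain ⟨a, ha⟩ := eventually_atTop.1 hpa
  obtain ⟨ε, hε, hball⟩ := Metric.eventually_nhds_iff.1 hpb
  exact ⟨max a 1, by positivity, ε, hε, fun α hα x hx =>
    hP (ha α (le_of_max_le_left hα)) (hball hx)⟩

section KKT

variable {n m q : ℕ} {f : E n → ℝ} {g : Fin m → E n → ℝ} {h : Fin q → E n → ℝ}
  {p : Fin n → ℝ → ℝ} {α : ℝ} {x y : E n}

theorem KKTcp.ne_zero_or_ne_zero (hKKT : KKTcp f g h p x y) (hp0 : ∀ i, deriv (p i) 0 < 0)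
    (i : Fin n) : x i ≠ 0 ∨ y i ≠ 0 := by
  obtain ⟨-, -, -, -, -, -, -, -, νy, γ, -, -, -, -, hνy, -, -, hstat⟩ := hKKT
  by_contra! hxy
  have := hstat i
  rw [hxy.1, hxy.2] at this
  linarith [hp0 i, hνy i]

theorem KKTcp.of_KKTpen (hpen : KKTpen f g h p α x y) (hcomp : ∀ i, x i * y i = 0) :
    KKTcp f g h p x y := by
  obtain ⟨hg, hh, hx, hy, lam, mu, νx, νy, hlam, hlamg, hνx, hνxx, hνy, hνyy, hstatx, hstaty⟩ :=
    hpen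
  refine ⟨hg, hh, hx, hy, hcomp, lam, mu, νx, νy, fun _ => α, hlam, hlamg, hνx, hνxx, hνy, hνyy,
    fun k => ?_, fun i => ?_⟩
  · linarith [hstatx k]
  · linarith [hstaty i]

theorem KKTpen.eq_zero_of_neg_deriv_lt (hpen : KKTpen f g h p α x y) {i : Fin n}
    (hi : -deriv (p i) (y i) < α * x i) : y i = 0 := by
  obtain ⟨-, -, -, -, -, -, -, νy, -, -, -, -, -, hνyy, -, hstaty⟩ := hpen
  have hνy : 0 < νy i := by linarith [hstaty i]
  exact (mul_eq_zero.1 (hνyy i)).resolve_left hνy.ne'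

theorem KKTpen.mul_eq_zero_of_norm_gradient_lt (hpen : KKTpen f g h p α x y) {xstar : E n}
    {c : ℝ} (hc : 0 < c) (hΦ : ∀ w ∈ mfcqCone g xstar, c * ‖w‖ ≤ ‖multiplierMap g h x w‖)
    (hinactive : ∀ i, g i xstar ≠ 0 → g i x < 0) (hsupp : ∀ k, xstar k ≠ 0 → 0 < x k ∧ y k = 0)
    {i : Fin n} (hi : ‖gradient f x‖ / c < α * y i) : x i * y i = 0 := by
  obtain ⟨-, -, hx, -, lam, mu, νx, -, hlam, hlamg, -, hνxx, -, -, hstatx, -⟩ := hpen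
  by_contra hne
  have hνx_of_pos : ∀ k, 0 < x k → νx k = 0 := fun k hk =>
    (mul_eq_zero.1 (hνxx k)).resolve_right hk.ne'
  set w : Multipliers m q n := (lam, mu, fun k => α * y k - νx k)
  have hw : w ∈ mfcqCone g xstar :=
    ⟨hlam, fun k hk => (mul_eq_zero.1 (hlamg k)).resolve_right (hinactive k hk).ne,
      fun k hk => by simp [w, (hsupp k hk).2, hνx_of_pos k (hsupp k hk).1]⟩
  have hΦw : multiplierMap g h x w = -gradient f x := by
    ext k
    rw [multiplierMap_apply_apply]
    simp only [w, PiLp.neg_apply]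
    linarith [hstatx k]
  have hwi : α * y i ≤ ‖w‖ := by
    have hxi : 0 < x i := (hx i).lt_of_ne' (left_ne_zero_of_mul hne)
    calc α * y i = w.2.2 i := by simp [w, hνx_of_pos i hxi]
      _ ≤ ‖w.2.2‖ := (le_abs_self _).trans (norm_le_pi_norm w.2.2 i)
      _ ≤ ‖w‖ := (norm_snd_le _).trans (norm_snd_le _)
  have := hΦ w hw
  rw [hΦw, norm_neg, ← le_div_iff₀' hc] at this
  linarith

theorem KKTcp.of_KKTpen_of_estimates (hpen : KKTpen f g h p α x y) {xstar ystar : E n}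
    (hsupp : ∀ i, xstar i ≠ 0 ∨ ystar i ≠ 0) {c : ℝ} (hc : 0 < c)
    (hΦ : ∀ w ∈ mfcqCone g xstar, c * ‖w‖ ≤ ‖multiplierMap g h x w‖)
    (hinactive : ∀ i, g i xstar ≠ 0 → g i x < 0) (hxpos : ∀ i, 0 ≠ xstar i → 0 < x i)
    (hxgrowth : ∀ i, xstar i ≠ 0 → -deriv (p i) (y i) < α * x i)
    (hygrowth : ∀ i, ystar i ≠ 0 → ‖gradient f x‖ / c < α * y i) :
    KKTcp f g h p x y := by
  have hyzero : ∀ k, xstar k ≠ 0 → 0 < x k ∧ y k = 0 := fun k hk =>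
    ⟨hxpos k hk.symm, hpen.eq_zero_of_neg_deriv_lt (hxgrowth k hk)⟩
  refine .of_KKTpen hpen fun i => ?_
  rcases hsupp i with hi | hi
  · simp [(hyzero i hi).2]
  · exact hpen.mul_eq_zero_of_norm_gradient_lt hc hΦ hinactive hyzero (hygrowth i hi)

end KKT

theorem stmt_15_general {n m q : ℕ} {ρ : ℝ} (hρ : 0 < ρ)
    (f : E n → ℝ) (g : Fin m → E n → ℝ) (h : Fin q → E n → ℝ)
    (hf : ContDiff ℝ 1 f) (hg : ∀ i, ContDiff ℝ 1 (g i)) (hh : ∀ j, ContDiff ℝ 1 (h j))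
    (p : Fin n → ℝ → ℝ) (s : Fin n → ℝ)
    (hp : ∀ i, ContDiff ℝ 1 (p i))
    (hconv : ∀ i, ConvexOn ℝ Set.univ (p i))
    (hspos : ∀ i, 0 < s i)
    (hscale : ∀ i, p i 0 - p i (s i) = ρ)
    (xstar ystar : E n)
    (hKKT : KKTcp f g h p xstar ystar)
    (hmfcq : SPMFCQ g h xstar) :
    ∃ αstar > (0 : ℝ), ∃ ε > (0 : ℝ), ∀ α ≥ αstar, ∀ x y : E n,
      ‖(x, y) - (xstar, ystar)‖ < ε →
      KKTpen f g h p α x y → KKTcp f g h p x y := by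
  have hsupp := hKKT.ne_zero_or_ne_zero fun i => (hconv i).deriv_neg_of_lt trivial trivial
    (hspos i) ((hp i).differentiable one_ne_zero _) (by linarith [hscale i])
  obtain ⟨hgle, -, hxs, hys, -⟩ := hKKT
  obtain ⟨c, hc, hΦ⟩ := hmfcq.exists_pos_eventually_mul_norm_le hg hh
  have hcoord : ∀ i, Continuous fun z : E n => z i := fun i => by fun_prop
  have hinactive : ∀ᶠ x in 𝓝 xstar, ∀ i, g i xstar ≠ 0 → g i x < 0 :=
    eventually_forall_lt_of_le_of_ne (v := fun _ _ => 0) (fun i => (hg i).continuous.continuousAt)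
      (fun _ => continuousAt_const) hgle
  have hxpos : ∀ᶠ x in 𝓝 xstar, ∀ i, 0 ≠ xstar i → 0 < x i :=
    eventually_forall_lt_of_le_of_ne (u := fun _ _ => 0) (fun _ => continuousAt_const)
      (fun i => (hcoord i).continuousAt) hxs
  have hxgrowth : ∀ᶠ a in atTop ×ˢ 𝓝 (xstar, ystar),
      ∀ i, xstar i ≠ 0 → -deriv (p i) (a.2.2 i) < a.1 * a.2.1 i :=
    eventually_forall_lt_mul (u := fun i (z : E n × E n) => z.1 i)
      (fun i => ((hcoord i).comp continuous_fst).continuousAt)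
      (fun i => (((hp i).continuous_deriv le_rfl).comp
        ((hcoord i).comp continuous_snd)).neg.continuousAt) hxs
  have hygrowth : ∀ᶠ a in atTop ×ˢ 𝓝 (xstar, ystar),
      ∀ i, ystar i ≠ 0 → ‖gradient f a.2.1‖ / c < a.1 * a.2.2 i :=
    eventually_forall_lt_mul (u := fun i (z : E n × E n) => z.2 i)
      (fun i => ((hcoord i).comp continuous_snd).continuousAt)
      (fun _ => ((hf.continuous_gradient.comp continuous_fst).norm.div_const c).continuousAt) hys
  obtain ⟨αstar, hαstar, ε, hε, hnear⟩ := exists_forall_ge_forall_dist_lt_of_eventually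
    ((((continuous_fst.tendsto _).comp tendsto_snd).eventually ((hΦ.and hinactive).and hxpos)).and
      (hxgrowth.and hygrowth))
  refine ⟨αstar, hαstar, ε, hε, fun α hα x y hxy hpen => ?_⟩
  obtain ⟨⟨⟨hΦx, hinactivex⟩, hxposx⟩, hxgrowthx, hygrowthx⟩ :=
    hnear α hα (x, y) (by rwa [dist_eq_norm])
  exact .of_KKTpen_of_estimates hpen hsupp hc hΦx hinactivex hxposx hxgrowthx hygrowthx

/-- local exactness of the penalty approach under SP-MFCQ. -/
theorem stmt_15 {n m q : ℕ} (hn : 1 ≤ n) {ρ : ℝ} (hρ : 0 < ρ)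
    (f : E n → ℝ) (g : Fin m → E n → ℝ) (h : Fin q → E n → ℝ)
    (hf : ContDiff ℝ 1 f) (hg : ∀ i, ContDiff ℝ 1 (g i)) (hh : ∀ j, ContDiff ℝ 1 (h j))
    (p : Fin n → ℝ → ℝ) (s : Fin n → ℝ)
    (hp : ∀ i, ContDiff ℝ 1 (p i))
    (hconv : ∀ i, ConvexOn ℝ Set.univ (p i))
    (hspos : ∀ i, 0 < s i)
    (hmin : ∀ i t, p i (s i) ≤ p i t)
    (hstrict : ∀ i t, t ≠ s i → p i (s i) < p i t)
    (hscale : ∀ i, p i 0 - p i (s i) = ρ)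
    (xstar ystar : E n)
    (hKKT : KKTcp f g h p xstar ystar)
    (hmfcq : SPMFCQ g h xstar) :
    ∃ αstar > (0 : ℝ), ∃ ε > (0 : ℝ), ∀ α ≥ αstar, ∀ x y : E n,
      ‖(x, y) - (xstar, ystar)‖ < ε →
      KKTpen f g h p α x y → KKTcp f g h p x y :=
  stmt_15_general hρ f g h hf hg hh p s hp hconv hspos hscale xstar ystar hKKT hmfcq
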